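/- arXiv:2310.03403 — 2 statements merged into one kernel-verified Lean document; each statement's English description precedes it below -/
import Mathlib

section
/- The sectional curvature of the plane spanned by the zonal flow ξ̂ = (ν√(4π/3) e_{10}, a) and a unit vector η̂ supported in a single angular momentum l₀ with azimuthal number ±m₀ equals κ̂(ξ̂,η̂) = m₀²·[ (ν²/4)(α²+2)² + (νa/2)(α²+2) + a²/4 ] / [ (ν²(4π/3)(α²+2) + a²)·(α²+l₀(l₀+1))² ]; in particular this sectional curvature is nonnegative, and strictly positive whenever m₀ ≠ 0 and ν(α²+2) + a ≠ 0. -/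
open Real

/-- Sectional curvature of the plane spanned by the zonal flow
`ξ̂ = (ν√(4π/3) e_{10}, a)` and a unit vector `η̂` with a single angular
momentum `l₀` and azimuthal numbers `±m₀`:
`κ̂ = m₀²[(ν²/4)(α²+2)² + (νa/2)(α²+2) + a²/4] /
      [(ν²(4π/3)(α²+2)+a²)(α²+l₀(l₀+1))²]`.
The numerator factors as `(m₀²/4)(ν(α²+2)+a)²`, hence `κ̂ ≥ 0`, with strict
positivity whenever `m₀ ≠ 0` and `ν(α²+2)+a ≠ 0`. -/
theorem zonal_sectional_curvature_nonneg
    (ν a α : ℝ) (l₀ m₀ : ℕ) (hl : 1 ≤ l₀) (hm : 0 < m₀) (hml : m₀ ≤ l₀)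
    (hpos : 0 < ν ^ 2 * (4 * Real.pi / 3) * (α ^ 2 + 2) + a ^ 2) :
    (m₀ : ℝ) ^ 2 * ((ν ^ 2 / 4) * (α ^ 2 + 2) ^ 2 + (ν * a / 2) * (α ^ 2 + 2) + a ^ 2 / 4) /
        ((ν ^ 2 * (4 * Real.pi / 3) * (α ^ 2 + 2) + a ^ 2) *
          (α ^ 2 + (l₀ : ℝ) * (l₀ + 1)) ^ 2) =
      ((m₀ : ℝ) ^ 2 / 4) * (ν * (α ^ 2 + 2) + a) ^ 2 /
        ((ν ^ 2 * (4 * Real.pi / 3) * (α ^ 2 + 2) + a ^ 2) *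
          (α ^ 2 + (l₀ : ℝ) * (l₀ + 1)) ^ 2) ∧
    0 ≤ (m₀ : ℝ) ^ 2 * ((ν ^ 2 / 4) * (α ^ 2 + 2) ^ 2 + (ν * a / 2) * (α ^ 2 + 2) + a ^ 2 / 4) /
        ((ν ^ 2 * (4 * Real.pi / 3) * (α ^ 2 + 2) + a ^ 2) *
          (α ^ 2 + (l₀ : ℝ) * (l₀ + 1)) ^ 2) ∧
    (ν * (α ^ 2 + 2) + a ≠ 0 →
      0 < (m₀ : ℝ) ^ 2 * ((ν ^ 2 / 4) * (α ^ 2 + 2) ^ 2 + (ν * a / 2) * (α ^ 2 + 2) + a ^ 2 / 4) /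
        ((ν ^ 2 * (4 * Real.pi / 3) * (α ^ 2 + 2) + a ^ 2) *
          (α ^ 2 + (l₀ : ℝ) * (l₀ + 1)) ^ 2)) := by
  have hl' : (1 : ℝ) ≤ (l₀ : ℝ) := by exact_mod_cast hl
  have hL : 0 < α ^ 2 + (l₀ : ℝ) * (l₀ + 1) := by positivity
  have hden : 0 < (ν ^ 2 * (4 * Real.pi / 3) * (α ^ 2 + 2) + a ^ 2) *
      (α ^ 2 + (l₀ : ℝ) * (l₀ + 1)) ^ 2 := by positivity
  have hnum : (m₀ : ℝ) ^ 2 * ((ν ^ 2 / 4) * (α ^ 2 + 2) ^ 2 + (ν * a / 2) * (α ^ 2 + 2) + a ^ 2 / 4)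
      = ((m₀ : ℝ) ^ 2 / 4) * (ν * (α ^ 2 + 2) + a) ^ 2 := by ring
  refine ⟨by rw [hnum], ?_, ?_⟩
  · rw [hnum]; positivity
  · intro h
    rw [hnum]
    have hm' : (0 : ℝ) < (m₀ : ℝ) := by exact_mod_cast hm
    apply div_pos _ hden
    positivity
end

section
/- Define a_m^l = (l²-m²)/(4l²-1), b_l = (α²+l(l+1))/(α²+l(l-1)), c_l = 6/(α²+l(l+1)), x_l = α²/(α²+l(l+1)), and Θ(l₀,m₀,α) as in the tradewind curvature formula. Then for m₀ = l₀, lim_{l₀→∞} l₀²·Θ(l₀,l₀,α) = -4. -/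
open Filter

/-- `a_m^l = (l²-m²)/(4l²-1)`. -/
noncomputable def aml (l m : ℕ) : ℝ :=
  ((l : ℝ) ^ 2 - (m : ℝ) ^ 2) / (4 * (l : ℝ) ^ 2 - 1)

/-- `b_l = (α²+l(l+1))/(α²+l(l-1))`. -/
noncomputable def bC (α l : ℝ) : ℝ := (α ^ 2 + l * (l + 1)) / (α ^ 2 + l * (l - 1))

/-- `c_l = 6/(α²+l(l+1))`. -/
noncomputable def cC (α l : ℝ) : ℝ := 6 / (α ^ 2 + l * (l + 1))

/-- `x_l = α²/(α²+l(l+1))`. -/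
noncomputable def xC (α l : ℝ) : ℝ := α ^ 2 / (α ^ 2 + l * (l + 1))

/-- The term `Θ` from the tradewind curvature formula. -/
noncomputable def Θ (α : ℝ) (l₀ m₀ : ℕ) : ℝ :=
  (1 - cC α l₀) ^ 2 * (aml l₀ m₀ * bC α l₀ + aml (l₀ + 1) m₀ / bC α ((l₀ : ℝ) + 1)) +
    2 * (1 + cC α l₀) * (aml l₀ m₀ + aml (l₀ + 1) m₀) -
    3 * (aml l₀ m₀ / bC α l₀ + aml (l₀ + 1) m₀ * bC α ((l₀ : ℝ) + 1)) +
    xC α ((l₀ : ℝ) - 1) * (aml l₀ m₀ / bC α l₀) *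
      (xC α ((l₀ : ℝ) - 1) - 2 * bC α l₀ * (1 - cC α l₀) + 2) +
    xC α ((l₀ : ℝ) + 1) * aml (l₀ + 1) m₀ * bC α ((l₀ : ℝ) + 1) *
      (xC α ((l₀ : ℝ) + 1) - (2 / bC α ((l₀ : ℝ) + 1)) * (1 - cC α l₀) + 2)

set_option maxHeartbeats 1600000 in
/-- For `m₀ = l₀`, `lim_{l₀→∞} l₀² Θ(l₀,l₀,α) = -4`. -/
theorem limit_l0sq_Theta (α : ℝ) (hα : 0 ≤ α) :
    Tendsto (fun l₀ : ℕ => (l₀ : ℝ) ^ 2 * Θ α l₀ l₀) atTop (nhds (-4)) := by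
  have hsq : (0:ℝ) ≤ α ^ 2 := sq_nonneg α
  set g : ℝ → ℝ := fun u =>
    (α^4*u^3 + 8*α^2*u^3 - 4*α^2*u^2 + 48*u^3 - 8*u^2 - 28*u - 8) /
      ((2+3*u)*(α^2*u^2+1+u)*(α^2*u^2+2*u^2+3*u+1)) with hgdef
  have hcont : ContinuousAt g 0 := by
    apply ContinuousAt.div
    · fun_prop
    · fun_prop
    · norm_num
  have hg0 : g 0 = -4 := by
    simp only [hgdef]
    norm_num
  have h1 : Tendsto (fun n : ℕ => g (1 / (n:ℝ))) atTop (nhds (-4)) := by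
    rw [← hg0]
    exact hcont.tendsto.comp tendsto_one_div_atTop_nhds_zero_nat
  refine h1.congr' ?_
  filter_upwards [eventually_ge_atTop 2] with n hn
  have hn2 : (2:ℝ) ≤ (n:ℝ) := by exact_mod_cast hn
  set x : ℝ := (n:ℝ) with hxdef
  have hx0 : (0:ℝ) < x := by linarith
  have hxne : x ≠ 0 := ne_of_gt hx0
  have hD1 : (0:ℝ) < α^2 + x*(x+1) := by nlinarith
  have hD2 : (0:ℝ) < α^2 + x*(x-1) := by nlinarith
  have hD3 : (0:ℝ) < α^2 + (x+1)*(x+2) := by nlinarith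
  have h2x3 : (0:ℝ) < 2*x+3 := by linarith
  have h2x1 : (0:ℝ) < 2*x+1 := by linarith
  -- rewrite g (1/x) as a rational function of x
  have hgx : g (1/x) = (x^2*(α^4 + 8*α^2 - 4*α^2*x - 8*x^3 - 28*x^2 - 8*x + 48)) /
      ((2*x+3)*(α^2+x*(x+1))*(α^2+(x+1)*(x+2))) := by
    have hu1 : (2:ℝ)+3*(1/x) ≠ 0 := by positivity
    have hu2 : α^2*(1/x)^2+1+(1/x) ≠ 0 := by positivity
    have hu3 : α^2*(1/x)^2+2*(1/x)^2+3*(1/x)+1 ≠ 0 := by positivity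
    simp only [hgdef]
    field_simp
    ring
  rw [hgx]
  -- simplify the aml terms
  have e0 : aml n n = 0 := by simp [aml]
  have e1 : aml (n + 1) n = 1/(2*x+3) := by
    unfold aml
    push_cast
    rw [div_eq_div_iff (by nlinarith) (ne_of_gt h2x3)]
    ring
  have eb0 : bC α x = (α^2 + x*(x+1))/(α^2 + x*(x-1)) := rfl
  have eb1 : bC α (x+1) = (α^2 + (x+1)*(x+2))/(α^2 + x*(x+1)) := by
    unfold bC
    ring_nf
  have ec : cC α x = 6/(α^2 + x*(x+1)) := rfl
  have exm : xC α (x-1) = α^2/(α^2 + x*(x-1)) := by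
    unfold xC
    ring_nf
  have exp1 : xC α (x+1) = α^2/(α^2 + (x+1)*(x+2)) := by
    unfold xC
    ring_nf
  unfold Θ
  push_cast
  rw [← hxdef, e0, e1, eb0, eb1, ec, exm, exp1]
  simp only [zero_mul, mul_zero, zero_div, div_zero, zero_add, add_zero]
  field_simp
  ring
end
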